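/- arXiv:1206.2873 — 2 statements merged into one kernel-verified Lean document; each statement's English description precedes it below -/
import Mathlib

section
/- Let (S, μ) be a finite measure space, let 0 < m < M be real numbers, and let β, g : S → ℝ be measurable functions with m ≤ β ≤ M μ-a.e. and g integrable. Suppose that for every bounded measurable function l : S → ℝ for which there exists ε₀ > 0 such that m ≤ β + ε·l ≤ M μ-a.e. for all ε ∈ (0, ε₀], one has ∫_S l·(2β + g) dμ ≥ 0. Then β(x) = min(max(−g(x)/2, m), M) for μ-a.e. x ∈ S. -/
/-!
Let `P = min (max (-g/2) m) M` be the pointwise projection of `-g/2` onto `[m, M]`. The direction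
`l = P - β` is admissible, since `β + ε l` is a convex combination of `β` and `P` for `ε ≤ 1`.
The projection inequality `(P - β) (P + g/2) ≤ 0` gives `l (2β + g) ≤ -2 l² ≤ 0` pointwise, so
the variational inequality forces `l (2β + g)`, and hence `l`, to vanish almost everywhere.
-/

open MeasureTheory Filter Set

lemma clamp_mem_Icc {m M : ℝ} (hmM : m ≤ M) (c : ℝ) : min (max c m) M ∈ Icc m M :=
  ⟨le_min (le_max_right _ _) hmM, min_le_right _ _⟩

lemma clamp_eq_self {m M c : ℝ} (hc : c ∈ Icc m M) : min (max c m) M = c := by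
  rw [max_eq_left hc.1, min_eq_left hc.2]

lemma clamp_sub_mul_sub_le_neg_sq {m M b : ℝ} (hmM : m ≤ M) (hb : b ∈ Icc m M) (c : ℝ) :
    (min (max c m) M - b) * (b - c) ≤ -(min (max c m) M - b) ^ 2 := by
  obtain ⟨hmb, hbM⟩ := hb
  rcases le_total c m with hcm | hmc
  · rw [max_eq_right hcm, min_eq_left hmM]
    nlinarith
  rcases le_total c M with hcM | hMc
  · rw [max_eq_left hmc, min_eq_left hcM]
    nlinarith
  · rw [max_eq_left hmc, min_eq_right hMc]
    nlinarith

lemma ae_eq_zero_of_nonpos_of_integral_nonneg {α : Type*} [MeasurableSpace α] {μ : Measure α}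
    {f : α → ℝ} (hf : f ≤ᵐ[μ] 0) (hfi : Integrable f μ) (hint : 0 ≤ ∫ x, f x ∂μ) :
    f =ᵐ[μ] 0 := by
  have hneg : 0 ≤ᵐ[μ] -f := hf.mono fun x hx => neg_nonneg.mpr hx
  have hzero : ∫ x, (-f) x ∂μ = 0 := by
    simp only [Pi.neg_apply, integral_neg, neg_eq_zero]
    exact le_antisymm (integral_nonpos_of_ae hf) hint
  exact ((integral_eq_zero_iff_of_nonneg_ae hneg hfi.neg).mp hzero).mono fun x hx => by
    simpa using hx

lemma ae_eq_zero_of_integral_nonneg_of_le_neg_sq {α : Type*} [MeasurableSpace α]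
    {μ : Measure α} {f u : α → ℝ} (hf : ∀ᵐ x ∂μ, f x ≤ -u x ^ 2) (hfi : Integrable f μ)
    (hint : 0 ≤ ∫ x, f x ∂μ) : u =ᵐ[μ] 0 := by
  have hf0 := ae_eq_zero_of_nonpos_of_integral_nonneg
    (hf.mono fun x hx => hx.trans (neg_nonpos.mpr (sq_nonneg _))) hfi hint
  filter_upwards [hf0, hf] with x hx0 hx
  have hx0' : f x = 0 := hx0
  exact pow_eq_zero_iff two_ne_zero |>.mp (le_antisymm (by linarith) (sq_nonneg _))

theorem stmt1_general {S : Type*} [MeasurableSpace S] (μ : Measure S) [IsFiniteMeasure μ]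
    (m M : ℝ) (hmM : m < M)
    (β g : S → ℝ) (hβmeas : Measurable β) (hgmeas : Measurable g)
    (hβ : ∀ᵐ x ∂μ, m ≤ β x ∧ β x ≤ M)
    (hgint : Integrable g μ)
    (h : ∀ l : S → ℝ, Measurable l → (∃ C : ℝ, ∀ x, |l x| ≤ C) →
      (∃ ε₀ > (0:ℝ), ∀ ε : ℝ, 0 < ε → ε ≤ ε₀ →
        ∀ᵐ x ∂μ, m ≤ β x + ε * l x ∧ β x + ε * l x ≤ M) →
      0 ≤ ∫ x, l x * (2 * β x + g x) ∂μ) :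
    ∀ᵐ x ∂μ, β x = min (max (-(g x) / 2) m) M := by
  set P : S → ℝ := fun x => min (max (-(g x) / 2) m) M
  -- `β` clamped to `[m, M]`, so that `l` below is bounded everywhere and not only a.e.
  set β' : S → ℝ := fun x => min (max (β x) m) M
  set l : S → ℝ := fun x => P x - β' x
  have hP (x : S) : P x ∈ Icc m M := clamp_mem_Icc hmM.le _
  have hβ' (x : S) : β' x ∈ Icc m M := clamp_mem_Icc hmM.le _
  have hβ'β : ∀ᵐ x ∂μ, β' x = β x := hβ.mono fun x hx => clamp_eq_self hx
  have hl_meas : Measurable l := by fun_prop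
  have hl_bdd (x : S) : |l x| ≤ M - m :=
    abs_sub_le_of_le_of_le (hP x).1 (hP x).2 (hβ' x).1 (hβ' x).2
  have hadm : ∀ ε : ℝ, 0 < ε → ε ≤ 1 → ∀ᵐ x ∂μ, m ≤ β x + ε * l x ∧ β x + ε * l x ≤ M := by
    intro ε hε hε1
    filter_upwards [hβ'β] with x hx
    rw [← hx]
    exact (convex_Icc m M).add_smul_sub_mem (hβ' x) (hP x) ⟨hε.le, hε1⟩
  have hvi := h l hl_meas ⟨M - m, hl_bdd⟩ ⟨1, one_pos, hadm⟩
  have hβint : Integrable β μ :=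
    .of_bound hβmeas.aestronglyMeasurable (max |m| |M|)
      (hβ.mono fun x hx => abs_le_max_abs_abs hx.1 hx.2)
  have hint : Integrable (fun x => l x * (2 * β x + g x)) μ :=
    ((hβint.const_mul 2).add hgint).bdd_mul hl_meas.aestronglyMeasurable
      (Eventually.of_forall fun x => hl_bdd x)
  have hle : ∀ᵐ x ∂μ, l x * (2 * β x + g x) ≤ -l x ^ 2 := by
    filter_upwards [hβ'β, hβ] with x hx hβx
    have hproj := clamp_sub_mul_sub_le_neg_sq hmM.le hβx (-(g x) / 2)
    simp only [l, hx]
    nlinarith [sq_nonneg (P x - β x)]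
  filter_upwards [ae_eq_zero_of_integral_nonneg_of_le_neg_sq hle hint hvi, hβ'β] with x hlx hx
  simp only [Pi.zero_apply, l, hx, sub_eq_zero] at hlx
  exact hlx.symm

/-- Characterization of the optimal heat transfer coefficient for the nonlocal thermistor
problem: if `m ≤ β ≤ M` a.e. and the first-order variational inequality
`∫ l (2β + g) dμ ≥ 0` holds for every bounded measurable admissible variation direction `l`,
then `β = min (max (-g/2) m) M` almost everywhere. -/
theorem stmt1 {S : Type*} [MeasurableSpace S] (μ : Measure S) [IsFiniteMeasure μ]
    (m M : ℝ) (hm : 0 < m) (hmM : m < M)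
    (β g : S → ℝ) (hβmeas : Measurable β) (hgmeas : Measurable g)
    (hβ : ∀ᵐ x ∂μ, m ≤ β x ∧ β x ≤ M)
    (hgint : Integrable g μ)
    (h : ∀ l : S → ℝ, Measurable l → (∃ C : ℝ, ∀ x, |l x| ≤ C) →
      (∃ ε₀ > (0:ℝ), ∀ ε : ℝ, 0 < ε → ε ≤ ε₀ →
        ∀ᵐ x ∂μ, m ≤ β x + ε * l x ∧ β x + ε * l x ≤ M) →
      0 ≤ ∫ x, l x * (2 * β x + g x) ∂μ) :
    ∀ᵐ x ∂μ, β x = min (max (-(g x) / 2) m) M :=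
  stmt1_general μ m M hmM β g hβmeas hgmeas hβ hgint h
end

section
/- Let (Ω, μ) be a finite measure space with μ(Ω) > 0, let λ > 0, L ≥ 0, c > 0, C ≥ 0, K > 0, and let f : ℝ → ℝ be Lipschitz with constant L satisfying c ≤ f(ξ) for all ξ ∈ ℝ and f(ξ) ≤ C for all ξ with |ξ| ≤ K. Then for all measurable u₁, u₂ : Ω → ℝ with |u₁| ≤ K and |u₂| ≤ K μ-a.e., setting a₀ = c·μ(Ω), one has ‖λ f(u₁)/(∫_Ω f(u₁) dμ)² − λ f(u₂)/(∫_Ω f(u₂) dμ)²‖_{L²(μ)} ≤ (λL/a₀² + 2λCLμ(Ω)/a₀³)·‖u₁ − u₂‖_{L²(μ)}. -/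
/-!
Put `vᵢ = f ∘ uᵢ` and `Iᵢ = ∫ vᵢ`, so that `Iᵢ ≥ a₀ = c μ(Ω)`, `vᵢ ≤ C` a.e. and
`‖v₁ - v₂‖₂ ≤ L ‖u₁ - u₂‖₂`. Split
`λ v₁ / I₁² - λ v₂ / I₂² = λ (v₁ - v₂) / I₁² + λ v₂ (1 / I₁² - 1 / I₂²)`.
The first term has `L²` norm at most `λ / a₀² ‖v₁ - v₂‖₂`. The second is pointwise at most the
constant `2 λ C |I₁ - I₂| / a₀³`, where `|I₁ - I₂| ≤ ‖v₁ - v₂‖₁ ≤ μ(Ω)^{1/2} ‖v₁ - v₂‖₂`, and the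
`L²` norm of a constant costs another factor `μ(Ω)^{1/2}`.
-/

open MeasureTheory

open scoped ENNReal NNReal

lemma abs_one_div_sq_sub_one_div_sq_le {a x y : ℝ} (ha : 0 < a) (hx : a ≤ x) (hy : a ≤ y) :
    |1 / x ^ 2 - 1 / y ^ 2| ≤ 2 * |x - y| / a ^ 3 := by
  have hx₀ : 0 < x := ha.trans_le hx
  have hy₀ : 0 < y := ha.trans_le hy
  have hxy : a ^ 3 ≤ x * y ^ 2 := calc
    a ^ 3 = a * a ^ 2 := by ring
    _ ≤ x * y ^ 2 := by gcongr
  have hyx : a ^ 3 ≤ x ^ 2 * y := calc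
    a ^ 3 = a ^ 2 * a := by ring
    _ ≤ x ^ 2 * y := by gcongr
  have hsum : 1 / (x * y ^ 2) + 1 / (x ^ 2 * y) ≤ 2 / a ^ 3 := by
    calc 1 / (x * y ^ 2) + 1 / (x ^ 2 * y) ≤ 1 / a ^ 3 + 1 / a ^ 3 := by
          gcongr
      _ = 2 / a ^ 3 := by ring
  calc |1 / x ^ 2 - 1 / y ^ 2|
      = |x - y| * (1 / (x * y ^ 2) + 1 / (x ^ 2 * y)) := by
        rw [show 1 / x ^ 2 - 1 / y ^ 2 = (y - x) * (1 / (x * y ^ 2) + 1 / (x ^ 2 * y)) by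
            field_simp; ring,
          abs_mul, abs_of_pos (by positivity : 0 < 1 / (x * y ^ 2) + 1 / (x ^ 2 * y)),
            abs_sub_comm]
    _ ≤ |x - y| * (2 / a ^ 3) := by gcongr
    _ = 2 * |x - y| / a ^ 3 := by ring

section

variable {α : Type*} [MeasurableSpace α] {μ : Measure α}

lemma mul_measureReal_univ_le_integral [IsFiniteMeasure μ] {g : α → ℝ} {c : ℝ}
    (hg : Integrable g μ) (hc : ∀ x, c ≤ g x) : c * μ.real Set.univ ≤ ∫ x, g x ∂μ := by
  simpa [mul_comm] using integral_mono (integrable_const c) hg hc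

lemma LipschitzWith.eLpNorm_comp_sub_le {E F : Type*} [NormedAddCommGroup E]
    [NormedAddCommGroup F] {K : ℝ≥0} {f : E → F} (hf : LipschitzWith K f) (u₁ u₂ : α → E)
    (p : ℝ≥0∞) :
    eLpNorm (fun x => f (u₁ x) - f (u₂ x)) p μ ≤ K * eLpNorm (fun x => u₁ x - u₂ x) p μ := by
  rw [← ENNReal.ofReal_coe_nnreal]
  exact eLpNorm_le_mul_eLpNorm_of_ae_le_mul (ae_of_all μ fun x => by
    simpa [dist_eq_norm] using hf.dist_le_mul (u₁ x) (u₂ x)) p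

lemma eLpNorm_const_integral_norm_le {E : Type*} [NormedAddCommGroup E] {d : α → E}
    (hd : Integrable d μ) :
    eLpNorm (fun _ : α => ∫ x, ‖d x‖ ∂μ) 2 μ ≤ μ Set.univ * eLpNorm d 2 μ := by
  have hL1 : ENNReal.ofReal (∫ x, ‖d x‖ ∂μ) ≤ eLpNorm d 2 μ * μ Set.univ ^ (1 / 2 : ℝ) := by
    rw [ofReal_integral_norm_eq_lintegral_enorm hd, ← eLpNorm_one_eq_lintegral_enorm]
    convert eLpNorm_le_eLpNorm_mul_rpow_measure_univ one_le_two hd.aestronglyMeasurable using 3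
    norm_num
  have htwo : 1 / (2 : ℝ≥0∞).toReal = 1 / 2 := by norm_num
  rw [eLpNorm_const' _ two_ne_zero ENNReal.ofNat_ne_top, htwo,
    Real.enorm_eq_ofReal (integral_nonneg fun _ => norm_nonneg _)]
  calc _ ≤ eLpNorm d 2 μ * μ Set.univ ^ (1 / 2 : ℝ) * μ Set.univ ^ (1 / 2 : ℝ) := by gcongr
    _ = μ Set.univ * eLpNorm d 2 μ := by
        rw [mul_assoc, ← ENNReal.rpow_add_of_nonneg _ _ (by norm_num) (by norm_num), add_halves,
          ENNReal.rpow_one, mul_comm]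

lemma eLpNorm_mul_one_div_sq_integral_sub_le [IsFiniteMeasure μ] {v₁ v₂ : α → ℝ}
    {lam a C : ℝ} (hlam : 0 ≤ lam) (ha : 0 < a) (hC : 0 ≤ C) (hv₁ : Integrable v₁ μ)
    (hv₂ : Integrable v₂ μ)
    (ha₁ : a ≤ ∫ x, v₁ x ∂μ) (ha₂ : a ≤ ∫ x, v₂ x ∂μ) (hv₂C : ∀ᵐ x ∂μ, ‖v₂ x‖ ≤ C) :
    eLpNorm (fun x => lam * v₂ x * (1 / (∫ y, v₁ y ∂μ) ^ 2 - 1 / (∫ y, v₂ y ∂μ) ^ 2)) 2 μ ≤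
      ENNReal.ofReal (2 * lam * C / a ^ 3) * (μ Set.univ * eLpNorm (fun x => v₁ x - v₂ x) 2 μ) := by
  set J := ∫ x, ‖v₁ x - v₂ x‖ ∂μ
  have hI : |∫ y, v₁ y ∂μ - ∫ y, v₂ y ∂μ| ≤ J := by
    rw [← integral_sub hv₁ hv₂]
    exact norm_integral_le_integral_norm (fun x => v₁ x - v₂ x)
  have hbound : ∀ᵐ x ∂μ,
      ‖lam * v₂ x * (1 / (∫ y, v₁ y ∂μ) ^ 2 - 1 / (∫ y, v₂ y ∂μ) ^ 2)‖ ≤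
        2 * lam * C / a ^ 3 * ‖J‖ := hv₂C.mono fun x hx => by
    rw [norm_mul, norm_mul, Real.norm_of_nonneg hlam,
      Real.norm_of_nonneg (integral_nonneg fun _ => norm_nonneg _), Real.norm_eq_abs]
    calc lam * ‖v₂ x‖ * |1 / (∫ y, v₁ y ∂μ) ^ 2 - 1 / (∫ y, v₂ y ∂μ) ^ 2|
        ≤ lam * C * (2 * J / a ^ 3) := by
          gcongr
          exact (abs_one_div_sq_sub_one_div_sq_le ha ha₁ ha₂).trans (by gcongr)
      _ = _ := by ring
  exact (eLpNorm_le_mul_eLpNorm_of_ae_le_mul hbound 2).trans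
    (mul_le_mul_right (eLpNorm_const_integral_norm_le (hv₁.sub hv₂)) _)

lemma eLpNorm_div_sq_integral_sub_le [IsFiniteMeasure μ] {v₁ v₂ : α → ℝ} {lam a C : ℝ}
    (hlam : 0 ≤ lam) (ha : 0 < a) (hC : 0 ≤ C) (hv₁ : Integrable v₁ μ) (hv₂ : Integrable v₂ μ)
    (ha₁ : a ≤ ∫ x, v₁ x ∂μ) (ha₂ : a ≤ ∫ x, v₂ x ∂μ) (hv₂C : ∀ᵐ x ∂μ, ‖v₂ x‖ ≤ C) :
    eLpNorm (fun x =>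
        lam * v₁ x / (∫ y, v₁ y ∂μ) ^ 2 - lam * v₂ x / (∫ y, v₂ y ∂μ) ^ 2) 2 μ ≤
      ENNReal.ofReal (lam / a ^ 2 + 2 * lam * C * μ.real Set.univ / a ^ 3) *
        eLpNorm (fun x => v₁ x - v₂ x) 2 μ := by
  set I₁ := ∫ y, v₁ y ∂μ
  set I₂ := ∫ y, v₂ y ∂μ
  have hsplit : (fun x => lam * v₁ x / I₁ ^ 2 - lam * v₂ x / I₂ ^ 2) =
      (fun x => lam / I₁ ^ 2 * (v₁ x - v₂ x)) +
        fun x => lam * v₂ x * (1 / I₁ ^ 2 - 1 / I₂ ^ 2) := by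
    ext x
    simp only [Pi.add_apply]
    ring
  have hLocal : ∀ x, ‖lam / I₁ ^ 2 * (v₁ x - v₂ x)‖ ≤ lam / a ^ 2 * ‖v₁ x - v₂ x‖ := fun x => by
    rw [norm_mul, Real.norm_of_nonneg (by positivity)]
    gcongr
  calc _ ≤ eLpNorm (fun x => lam / I₁ ^ 2 * (v₁ x - v₂ x)) 2 μ +
        eLpNorm (fun x => lam * v₂ x * (1 / I₁ ^ 2 - 1 / I₂ ^ 2)) 2 μ := by
        rw [hsplit]
        exact eLpNorm_add_le ((hv₁.sub hv₂).aestronglyMeasurable.const_mul _)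
          ((hv₂.aestronglyMeasurable.const_mul _).mul_const _) one_le_two
    _ ≤ ENNReal.ofReal (lam / a ^ 2) * eLpNorm (fun x => v₁ x - v₂ x) 2 μ +
        ENNReal.ofReal (2 * lam * C / a ^ 3) *
          (μ Set.univ * eLpNorm (fun x => v₁ x - v₂ x) 2 μ) :=
      add_le_add (eLpNorm_le_mul_eLpNorm_of_ae_le_mul (ae_of_all _ hLocal) 2)
        (eLpNorm_mul_one_div_sq_integral_sub_le hlam ha hC hv₁ hv₂ ha₁ ha₂ hv₂C)
    _ = _ := by
      rw [← ofReal_measureReal, ← mul_assoc, ← ENNReal.ofReal_mul (by positivity),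
        ← add_mul, ← ENNReal.ofReal_add (by positivity) (by positivity)]
      congr 2
      ring

end

theorem stmt14_general {Ω : Type*} [MeasurableSpace Ω] (μ : Measure Ω) [IsFiniteMeasure μ]
    (hμ : 0 < (μ Set.univ).toReal)
    (lam L c C K : ℝ) (hlam : 0 < lam) (hL : 0 ≤ L) (hc : 0 < c) (hC : 0 ≤ C)
    (f : ℝ → ℝ) (hf : ∀ x y : ℝ, |f x - f y| ≤ L * |x - y|)
    (hfc : ∀ ξ : ℝ, c ≤ f ξ) (hfC : ∀ ξ : ℝ, |ξ| ≤ K → f ξ ≤ C)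
    (u₁ u₂ : Ω → ℝ) (h1meas : Measurable u₁) (h2meas : Measurable u₂)
    (hb1 : ∀ᵐ x ∂μ, |u₁ x| ≤ K) (hb2 : ∀ᵐ x ∂μ, |u₂ x| ≤ K) :
    eLpNorm (fun x =>
        lam * f (u₁ x) / (∫ y, f (u₁ y) ∂μ) ^ 2 -
        lam * f (u₂ x) / (∫ y, f (u₂ y) ∂μ) ^ 2) 2 μ ≤
      ENNReal.ofReal (lam * L / (c * (μ Set.univ).toReal) ^ 2 +
        2 * lam * C * L * (μ Set.univ).toReal / (c * (μ Set.univ).toReal) ^ 3) *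
      eLpNorm (fun x => u₁ x - u₂ x) 2 μ := by
  have hLip : LipschitzWith L.toNNReal f := .of_dist_le_mul fun x y => by
    simpa [Real.dist_eq, hL] using hf x y
  have hbound : ∀ u : Ω → ℝ, (∀ᵐ x ∂μ, |u x| ≤ K) → ∀ᵐ x ∂μ, ‖f (u x)‖ ≤ C := fun u hb =>
    hb.mono fun x hx => by
      rw [Real.norm_of_nonneg (hc.le.trans (hfc _))]
      exact hfC _ hx
  have hint : ∀ u : Ω → ℝ, Measurable u → (∀ᵐ x ∂μ, |u x| ≤ K) →
      Integrable (fun x => f (u x)) μ := fun u hu hb =>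
    .of_bound (hLip.continuous.measurable.comp hu).aestronglyMeasurable C (hbound u hb)
  have hv₁ := hint u₁ h1meas hb1
  have hv₂ := hint u₂ h2meas hb2
  calc _ ≤ ENNReal.ofReal (lam / (c * μ.real Set.univ) ^ 2 +
          2 * lam * C * μ.real Set.univ / (c * μ.real Set.univ) ^ 3) *
        eLpNorm (fun x => f (u₁ x) - f (u₂ x)) 2 μ :=
      eLpNorm_div_sq_integral_sub_le hlam.le (mul_pos hc hμ) hC hv₁ hv₂
        (mul_measureReal_univ_le_integral hv₁ fun _ => hfc _)
        (mul_measureReal_univ_le_integral hv₂ fun _ => hfc _) (hbound u₂ hb2)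
    _ ≤ _ * (ENNReal.ofReal L * eLpNorm (fun x => u₁ x - u₂ x) 2 μ) :=
      mul_le_mul_right (hLip.eLpNorm_comp_sub_le u₁ u₂ 2) _
    _ = _ := by
      rw [← mul_assoc, ← ENNReal.ofReal_mul (by positivity)]
      congr 2
      rw [measureReal_def]
      ring

/-- `L²`-Lipschitz continuity of the nonlocal source map `u ↦ λ f(u)/(∫ f(u) dμ)²` on
uniformly essentially bounded states (used in the uniqueness proof, Theorem 5.1), with
`a₀ = c·μ(Ω)`. -/
theorem stmt14 {Ω : Type*} [MeasurableSpace Ω] (μ : Measure Ω) [IsFiniteMeasure μ]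
    (hμ : 0 < (μ Set.univ).toReal)
    (lam L c C K : ℝ) (hlam : 0 < lam) (hL : 0 ≤ L) (hc : 0 < c) (hC : 0 ≤ C) (hK : 0 < K)
    (f : ℝ → ℝ) (hf : ∀ x y : ℝ, |f x - f y| ≤ L * |x - y|)
    (hfc : ∀ ξ : ℝ, c ≤ f ξ) (hfC : ∀ ξ : ℝ, |ξ| ≤ K → f ξ ≤ C)
    (u₁ u₂ : Ω → ℝ) (h1meas : Measurable u₁) (h2meas : Measurable u₂)
    (hb1 : ∀ᵐ x ∂μ, |u₁ x| ≤ K) (hb2 : ∀ᵐ x ∂μ, |u₂ x| ≤ K) :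
    eLpNorm (fun x =>
        lam * f (u₁ x) / (∫ y, f (u₁ y) ∂μ) ^ 2 -
        lam * f (u₂ x) / (∫ y, f (u₂ y) ∂μ) ^ 2) 2 μ ≤
      ENNReal.ofReal (lam * L / (c * (μ Set.univ).toReal) ^ 2 +
        2 * lam * C * L * (μ Set.univ).toReal / (c * (μ Set.univ).toReal) ^ 3) *
      eLpNorm (fun x => u₁ x - u₂ x) 2 μ :=
  stmt14_general μ hμ lam L c C K hlam hL hc hC f hf hfc hfC u₁ u₂ h1meas h2meas hb1 hb2
end
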